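/- arXiv:1109.0867 — 2 statements merged into one kernel-verified Lean document; each statement's English description precedes it below -/
import Mathlib

section
/- Let a ≥ 3 be an integer and G(s) = ∏_{p | a} (p^s - 1)²/(p^s(p^s+1)). Then G is twice differentiable at s = 1 and G''(1) = G(1) · [ (∑_{p|a} ((3p+1)/(p²-1)) log p)² − ∑_{p|a} ((3p³+2p²+3p)/(p²-1)²) (log p)² ]. -/
/-!
Each factor `f_p(s) = (x - 1)² / (x (x + 1))`, `x = p^s`, has logarithmic derivative
`L_p(s) = (3x + 1)/(x² - 1) · log p` for `s > 0`, so `G' = G · ∑ L_p` near `1` and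
`G'' = G · ((∑ L_p)² + ∑ L_p')`. Differentiating `L_p` once more gives
`L_p'(1) = -(3p³ + 2p² + 3p)/(p² - 1)² · (log p)²`.
-/

open Real Finset Filter Topology

section LogDeriv

variable {𝕜 : Type*} [NontriviallyNormedField 𝕜]

theorem hasDerivAt_finsetProd_of_logDeriv {ι : Type*} {u : Finset ι} {f L : ι → 𝕜 → 𝕜}
    {x : 𝕜} (hf : ∀ i ∈ u, HasDerivAt (f i) (f i x * L i x) x) :
    HasDerivAt (fun y => ∏ i ∈ u, f i y) ((∏ i ∈ u, f i x) * ∑ i ∈ u, L i x) x := by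
  classical
  refine (HasDerivAt.fun_finsetProd hf).congr_deriv ?_
  rw [Finset.mul_sum]
  refine Finset.sum_congr rfl fun i hi => ?_
  rw [smul_eq_mul, ← Finset.prod_erase_mul u _ hi]
  ring

theorem hasDerivAt_deriv_of_logDeriv {G A : 𝕜 → 𝕜} {x A' : 𝕜}
    (hG : ∀ᶠ y in 𝓝 x, HasDerivAt G (G y * A y) y) (hA : HasDerivAt A A' x) :
    HasDerivAt (deriv G) (G x * (A x ^ 2 + A')) x := by
  have hderiv : deriv G =ᶠ[𝓝 x] fun y => G y * A y := hG.mono fun y hy => hy.deriv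
  refine (hG.self_of_nhds.mul hA).congr_of_eventuallyEq hderiv |>.congr_deriv ?_
  ring

end LogDeriv

noncomputable def localFactor (c t : ℝ) : ℝ := (c ^ t - 1) ^ 2 / (c ^ t * (c ^ t + 1))

noncomputable def localFactorLogDeriv (c t : ℝ) : ℝ :=
  (3 * c ^ t + 1) / ((c ^ t) ^ 2 - 1) * Real.log c

variable {c s : ℝ}

theorem hasDerivAt_localFactor (hc : 0 < c) (hs : c ^ s ≠ 1) :
    HasDerivAt (localFactor c) (localFactor c s * localFactorLogDeriv c s) s := by
  have hE : HasDerivAt (fun t : ℝ => c ^ t) (c ^ s * Real.log c) s :=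
    (hasStrictDerivAt_const_rpow hc s).hasDerivAt
  have hx0 : 0 < c ^ s := rpow_pos_of_pos hc s
  have hN := (hE.sub_const 1).fun_pow 2
  have hD := hE.fun_mul (hE.add_const 1)
  refine (hN.div hD (by positivity)).congr_deriv ?_
  have hx1 : c ^ s - 1 ≠ 0 := sub_ne_zero.2 hs
  have hsq : (c ^ s) ^ 2 - 1 ≠ 0 :=
    sub_ne_zero.2 ((pow_eq_one_iff_of_nonneg hx0.le two_ne_zero).not.2 hs)
  simp only [localFactor, localFactorLogDeriv]
  field_simp
  ring

theorem hasDerivAt_localFactorLogDeriv (hc : 0 < c) (hs : c ^ s ≠ 1) :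
    HasDerivAt (localFactorLogDeriv c)
      (-((3 * (c ^ s) ^ 3 + 2 * (c ^ s) ^ 2 + 3 * c ^ s) / ((c ^ s) ^ 2 - 1) ^ 2 *
        Real.log c ^ 2)) s := by
  have hE : HasDerivAt (fun t : ℝ => c ^ t) (c ^ s * Real.log c) s :=
    (hasStrictDerivAt_const_rpow hc s).hasDerivAt
  have hx0 : 0 < c ^ s := rpow_pos_of_pos hc s
  have hsq : (c ^ s) ^ 2 - 1 ≠ 0 :=
    sub_ne_zero.2 ((pow_eq_one_iff_of_nonneg hx0.le two_ne_zero).not.2 hs)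
  have hN := (hE.const_mul 3).add_const 1
  have hD := (hE.fun_pow 2).sub_const 1
  refine ((hN.div hD hsq).mul_const (Real.log c)).congr_deriv ?_
  field_simp
  ring

theorem G_second_deriv_at_one_general (a : ℕ)
    (G : ℝ → ℝ)
    (hG : ∀ s : ℝ, G s = ∏ p ∈ a.primeFactors,
      ((p : ℝ) ^ s - 1) ^ 2 / ((p : ℝ) ^ s * ((p : ℝ) ^ s + 1))) :
    DifferentiableAt ℝ G 1 ∧ DifferentiableAt ℝ (deriv G) 1 ∧
      deriv (deriv G) 1 =
        G 1 * ((∑ p ∈ a.primeFactors,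
            (3 * (p : ℝ) + 1) / ((p : ℝ) ^ 2 - 1) * Real.log p) ^ 2 -
          ∑ p ∈ a.primeFactors,
            (3 * (p : ℝ) ^ 3 + 2 * (p : ℝ) ^ 2 + 3 * p) / ((p : ℝ) ^ 2 - 1) ^ 2
              * Real.log p ^ 2) := by
  obtain rfl : G = fun s => ∏ p ∈ a.primeFactors, localFactor p s := funext hG
  have hp : ∀ p ∈ a.primeFactors, (1 : ℝ) < p := fun p hp => by
    exact_mod_cast (Nat.prime_of_mem_primeFactors hp).one_lt
  have hG' : ∀ s : ℝ, 0 < s → HasDerivAt (fun s => ∏ p ∈ a.primeFactors, localFactor p s)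
      ((∏ p ∈ a.primeFactors, localFactor p s) * ∑ p ∈ a.primeFactors, localFactorLogDeriv p s)
      s := fun s hs => hasDerivAt_finsetProd_of_logDeriv fun p hpa =>
    hasDerivAt_localFactor (one_pos.trans (hp p hpa)) (one_lt_rpow (hp p hpa) hs).ne'
  have hL := HasDerivAt.fun_sum fun p hpa => hasDerivAt_localFactorLogDeriv (s := 1)
    (one_pos.trans (hp p hpa)) (one_lt_rpow (hp p hpa) one_pos).ne'
  have hG'' := hasDerivAt_deriv_of_logDeriv
    (eventually_of_mem (Ioi_mem_nhds one_pos) hG') hL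
  refine ⟨(hG' 1 one_pos).differentiableAt, hG''.differentiableAt, ?_⟩
  rw [hG''.deriv]
  simp only [localFactor, localFactorLogDeriv, rpow_one, sum_neg_distrib]
  ring

/-- Let `a ≥ 3` and `G(s) = ∏_{p ∣ a} (p^s−1)²/(p^s(p^s+1))`.  Then `G` is twice
differentiable at `s = 1` and
`G''(1) = G(1)·[(∑_{p∣a} ((3p+1)/(p²-1)) log p)² − ∑_{p∣a} ((3p³+2p²+3p)/(p²-1)²)(log p)²]`. -/
theorem G_second_deriv_at_one (a : ℕ) (ha : 3 ≤ a)
    (G : ℝ → ℝ)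
    (hG : ∀ s : ℝ, G s = ∏ p ∈ a.primeFactors,
      ((p : ℝ) ^ s - 1) ^ 2 / ((p : ℝ) ^ s * ((p : ℝ) ^ s + 1))) :
    DifferentiableAt ℝ G 1 ∧ DifferentiableAt ℝ (deriv G) 1 ∧
      deriv (deriv G) 1 =
        G 1 * ((∑ p ∈ a.primeFactors,
            (3 * (p : ℝ) + 1) / ((p : ℝ) ^ 2 - 1) * Real.log p) ^ 2 -
          ∑ p ∈ a.primeFactors,
            (3 * (p : ℝ) ^ 3 + 2 * (p : ℝ) ^ 2 + 3 * p) / ((p : ℝ) ^ 2 - 1) ^ 2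
              * Real.log p ^ 2) :=
  G_second_deriv_at_one_general a G hG
end

section
/- For positive integers n and a, R(n;a) equals the number of ordered pairs of positive divisors (d₁,d₂) of suitable form: specifically, (x,y) ↦ (ax−n, ay−n) gives a bijection between positive integer solutions of a/n = 1/x + 1/y and pairs (u,v) of positive integers with u·v = n² and u ≡ v ≡ −n (mod a). -/
/-!
Clearing denominators, `a/n = 1/x + 1/y` becomes `(ax - n)(ay - n) = n²`, and `1/x < a/n`
forces `ax > n`, so `u = ax - n` is a positive divisor of `n²` with `u + n ≡ 0 (mod a)`.
Conversely such a `u` makes `x = (u + n)/a` a positive integer, and the two maps are inverse.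
-/

lemma div_eq_one_div_add_one_div_iff {K : Type*} [Field K] {a n x y : K} (ha : a ≠ 0)
    (hn : n ≠ 0) (hx : x ≠ 0) (hy : y ≠ 0) :
    a / n = 1 / x + 1 / y ↔ (a * x - n) * (a * y - n) = n ^ 2 := by
  have key : (a * x - n) * (a * y - n) - n ^ 2 = a * n * x * y * (a / n - (1 / x + 1 / y)) := by
    field_simp
    ring
  rw [← sub_eq_zero, ← sub_eq_zero (a := (a * x - n) * _), key]
  simp [ha, hn, hx, hy]

lemma lt_mul_of_div_eq_one_div_add_one_div {n a x y : ℕ} (hn : 0 < n) (hx : 0 < x) (hy : 0 < y)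
    (h : (a : ℚ) / n = 1 / x + 1 / y) : n < a * x := by
  have hlt : (1 : ℚ) / x < a / n := by
    rw [h, lt_add_iff_pos_right]
    positivity
  rw [div_lt_div_iff₀ (by positivity) (by positivity), one_mul] at hlt
  exact_mod_cast hlt

lemma natCast_mul_sub_eq_neg {a n m : ℕ} (h : n ≤ a * m) :
    ((a * m - n : ℕ) : ZMod a) = -n := by
  simp [Nat.cast_sub h]

lemma mul_div_eq_add_of_natCast_eq_neg {a n u : ℕ} (h : (u : ZMod a) = -n) :
    a * ((u + n) / a) = u + n :=
  Nat.mul_div_cancel' <| (ZMod.natCast_eq_zero_iff _ _).1 <| by push_cast; rw [h, neg_add_cancel]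

section
variable {n a : ℕ}

lemma divisorPair_of_egyptian (hn : 0 < n) (ha : 0 < a) {x y : ℕ} (hx : 0 < x) (hy : 0 < y)
    (h : (a : ℚ) / n = 1 / x + 1 / y) :
    0 < a * x - n ∧ 0 < a * y - n ∧ (a * x - n) * (a * y - n) = n ^ 2 ∧
      ((a * x - n : ℕ) : ZMod a) = -n ∧ ((a * y - n : ℕ) : ZMod a) = -n := by
  have hnx := lt_mul_of_div_eq_one_div_add_one_div hn hx hy h
  have hny := lt_mul_of_div_eq_one_div_add_one_div hn hy hx (h.trans (add_comm _ _))
  refine ⟨by omega, by omega, ?_, natCast_mul_sub_eq_neg hnx.le, natCast_mul_sub_eq_neg hny.le⟩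
  rw [div_eq_one_div_add_one_div_iff (by positivity) (by positivity) (by positivity)
    (by positivity)] at h
  have hcast : (((a * x - n) * (a * y - n) : ℕ) : ℚ) = (n ^ 2 : ℕ) := by
    push_cast [Nat.cast_sub hnx.le, Nat.cast_sub hny.le]
    exact h
  exact_mod_cast hcast

lemma egyptian_of_divisorPair (hn : 0 < n) (ha : 0 < a) {u v x y : ℕ} (hx : a * x = u + n)
    (hy : a * y = v + n) (huv : u * v = n ^ 2) :
    0 < x ∧ 0 < y ∧ (a : ℚ) / n = 1 / x + 1 / y := by
  have hx0 : 0 < x := Nat.pos_of_mul_pos_left (a := a) (by omega)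
  have hy0 : 0 < y := Nat.pos_of_mul_pos_left (a := a) (by omega)
  refine ⟨hx0, hy0, ?_⟩
  rw [div_eq_one_div_add_one_div_iff (by positivity) (by positivity) (by positivity)
    (by positivity)]
  have hxq : (a : ℚ) * x - n = u := by rw [← Nat.cast_mul, hx]; push_cast; ring
  have hyq : (a : ℚ) * y - n = v := by rw [← Nat.cast_mul, hy]; push_cast; ring
  rw [hxq, hyq]
  exact_mod_cast huv

end

/-- `(x,y) ↦ (ax−n, ay−n)` is a bijection between positive integer solutions of
`a/n = 1/x + 1/y` and pairs `(u,v)` of positive integers with `uv = n²` and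
`u ≡ v ≡ −n (mod a)`. -/
theorem egyptian_solutions_equiv_divisor_pairs (n a : ℕ) (hn : 0 < n) (ha : 0 < a) :
    ∃ e : {xy : ℕ × ℕ // 0 < xy.1 ∧ 0 < xy.2 ∧
        (a : ℚ) / n = 1 / xy.1 + 1 / xy.2} ≃
      {uv : ℕ × ℕ // 0 < uv.1 ∧ 0 < uv.2 ∧ uv.1 * uv.2 = n ^ 2 ∧
        (uv.1 : ZMod a) = -(n : ZMod a) ∧ (uv.2 : ZMod a) = -(n : ZMod a)},
      ∀ xy, ((e xy : ℕ × ℕ) = (a * (xy : ℕ × ℕ).1 - n, a * (xy : ℕ × ℕ).2 - n)) := by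
  refine ⟨
    { toFun := fun p => ⟨(a * p.1.1 - n, a * p.1.2 - n),
        divisorPair_of_egyptian hn ha p.2.1 p.2.2.1 p.2.2.2⟩
      invFun := fun q => ⟨((q.1.1 + n) / a, (q.1.2 + n) / a),
        egyptian_of_divisorPair hn ha (mul_div_eq_add_of_natCast_eq_neg q.2.2.2.2.1)
          (mul_div_eq_add_of_natCast_eq_neg q.2.2.2.2.2) q.2.2.2.1⟩
      left_inv := ?_
      right_inv := ?_ }, fun _ => rfl⟩
  · rintro ⟨⟨x, y⟩, hx, hy, h⟩
    have hnx := lt_mul_of_div_eq_one_div_add_one_div hn hx hy h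
    have hny := lt_mul_of_div_eq_one_div_add_one_div hn hy hx (h.trans (add_comm _ _))
    ext <;>
      simp [Nat.sub_add_cancel hnx.le, Nat.sub_add_cancel hny.le, Nat.mul_div_cancel_left _ ha]
  · rintro ⟨⟨u, v⟩, -, -, -, hu, hv⟩
    ext <;> simp [mul_div_eq_add_of_natCast_eq_neg hu, mul_div_eq_add_of_natCast_eq_neg hv]
end
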